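/- arXiv:2602.21454 — 3 statements merged into one kernel-verified Lean document; each statement's English description precedes it below -/
import Mathlib

section
/- Let B = {(b_k, β_k)}_{k=1}^K and B̃ = {(b̃_k, β̃_k)}_{k=1}^{K̃} be sets of parameters with all b_k, b̃_k nonzero, the β_k pairwise distinct, the β̃_k pairwise distinct, and K̃ ≤ K. If ∑_{k=1}^K b_k β_k^n = ∑_{k=1}^{K̃} b̃_k β̃_k^n for all 0 ≤ n < N with N ≥ 2K, then K̃ = K and the two sets of pairs {(b_k, β_k)} and {(b̃_k, β̃_k)} are equal. -/
/-!
Collect the terms of `n ↦ ∑ k, b k * β k ^ n` into the finitely supported coefficient function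
`γ ↦ ∑_{β k = γ} b k`. Two such sums with at most `N` poles in total that agree for `n < N` have
coefficient functions whose difference is killed by a square Vandermonde matrix with distinct
nodes, hence they coincide. When the poles are distinct and the coefficients nonzero, the
parameter set is the graph of the coefficient function on its support.
-/

open Finset Finsupp

namespace Finsupp

variable {R : Type*} [CommRing R] [IsDomain R]

theorem eq_zero_of_sum_mul_pow_eq_zero {c : R →₀ R} {N : ℕ} (hN : #c.support ≤ N)
    (h : ∀ n < N, c.sum (fun γ a => a * γ ^ n) = 0) : c = 0 := by
  set e := c.support.equivFin
  have hpow : ∀ i : Fin #c.support, ∑ j, c (e.symm j) * (e.symm j : R) ^ (i : ℕ) = 0 := by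
    intro i
    rw [Fintype.sum_equiv e.symm _ (fun γ : c.support => c γ * (γ : R) ^ (i : ℕ)) fun _ => rfl,
      Finset.sum_coe_sort c.support fun γ => c γ * γ ^ (i : ℕ)]
    exact h i (i.2.trans_le hN)
  have hzero := Matrix.eq_zero_of_forall_pow_sum_mul_pow_eq_zero
    (Subtype.val_injective.comp e.symm.injective) hpow
  ext γ
  by_contra hγ
  exact hγ (by simpa using congrFun hzero (e ⟨γ, mem_support_iff.2 hγ⟩))

end Finsupp

section ExpSum

variable {ι ι' R : Type*} [Fintype ι] [Fintype ι'] [CommRing R]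

noncomputable def expSumCoeffs (b β : ι → R) : R →₀ R :=
  ∑ k, single (β k) (b k)

theorem expSumCoeffs_apply [DecidableEq R] (b β : ι → R) (γ : R) :
    expSumCoeffs b β γ = ∑ k with β k = γ, b k := by
  simp [expSumCoeffs, finsetSum_apply, single_apply, Finset.sum_ite]

theorem expSumCoeffs_apply_of_injective (b : ι → R) {β : ι → R} (hβ : Function.Injective β)
    (k : ι) : expSumCoeffs b β (β k) = b k := by
  classical
  rw [expSumCoeffs_apply, Finset.sum_eq_single_of_mem k (by simp)]
  intro j hj hjk
  exact absurd (hβ (mem_filter.1 hj).2) hjk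

theorem expSumCoeffs_apply_of_notMem_range (b : ι → R) {β : ι → R} {γ : R}
    (hγ : γ ∉ Set.range β) : expSumCoeffs b β γ = 0 := by
  classical
  rw [expSumCoeffs_apply, Finset.sum_eq_zero]
  intro k hk
  exact absurd ⟨k, (mem_filter.1 hk).2⟩ hγ

theorem card_support_expSumCoeffs_le (b β : ι → R) :
    #(expSumCoeffs b β).support ≤ Fintype.card ι := by
  classical
  calc #(expSumCoeffs b β).support
      ≤ #(univ.image β) := card_le_card fun γ hγ => by
        by_contra hγβ
        refine mem_support_iff.1 hγ (expSumCoeffs_apply_of_notMem_range b ?_)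
        simpa using hγβ
    _ ≤ Fintype.card ι := card_image_le

theorem sum_expSumCoeffs_mul_pow (b β : ι → R) (n : ℕ) :
    (expSumCoeffs b β).sum (fun γ a => a * γ ^ n) = ∑ k, b k * β k ^ n := by
  rw [expSumCoeffs, ← sum_finsetSum_index (fun _ => zero_mul _) fun _ _ _ => add_mul _ _ _]
  simp [sum_single_index]

theorem expSumCoeffs_eq_of_sum_mul_pow_eq [IsDomain R] {b β : ι → R} {b' β' : ι' → R} {N : ℕ}
    (hN : Fintype.card ι + Fintype.card ι' ≤ N)
    (h : ∀ n < N, ∑ k, b k * β k ^ n = ∑ k, b' k * β' k ^ n) :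
    expSumCoeffs b β = expSumCoeffs b' β' := by
  classical
  refine sub_eq_zero.1 (eq_zero_of_sum_mul_pow_eq_zero (N := N) ?_ fun n hn => ?_)
  · calc #(expSumCoeffs b β - expSumCoeffs b' β').support
        ≤ #(expSumCoeffs b β).support + #(expSumCoeffs b' β').support :=
          (card_le_card support_sub).trans (card_union_le _ _)
      _ ≤ N := (add_le_add (card_support_expSumCoeffs_le b β)
          (card_support_expSumCoeffs_le b' β')).trans hN
  · rw [sum_sub_index fun _ _ _ => sub_mul _ _ _, sum_expSumCoeffs_mul_pow,
      sum_expSumCoeffs_mul_pow, h n hn, sub_self]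

theorem range_eq_graph_expSumCoeffs {b β : ι → R} (hb : ∀ k, b k ≠ 0)
    (hβ : Function.Injective β) :
    Set.range (fun k => (b k, β k)) = {p | p.1 ≠ 0 ∧ expSumCoeffs b β p.2 = p.1} := by
  ext ⟨a, γ⟩
  constructor
  · rintro ⟨k, hk⟩
    obtain ⟨rfl, rfl⟩ := Prod.ext_iff.1 hk
    exact ⟨hb k, expSumCoeffs_apply_of_injective b hβ k⟩
  · rintro ⟨ha, hγ⟩
    by_cases hγβ : γ ∈ Set.range β
    · obtain ⟨k, rfl⟩ := hγβ
      exact ⟨k, Prod.ext ((expSumCoeffs_apply_of_injective b hβ k).symm.trans hγ) rfl⟩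
    · exact absurd (hγ.symm.trans (expSumCoeffs_apply_of_notMem_range b hγβ)) ha

end ExpSum

theorem exponential_sum_identifiable
    (K K' N : ℕ) (hK' : K' ≤ K) (hN : 2 * K ≤ N)
    (b β : Fin K → ℂ) (b' β' : Fin K' → ℂ)
    (hb : ∀ k, b k ≠ 0) (hb' : ∀ k, b' k ≠ 0)
    (hβ : Function.Injective β) (hβ' : Function.Injective β')
    (h : ∀ n : ℕ, n < N →
      ∑ k : Fin K, b k * β k ^ n = ∑ k : Fin K', b' k * β' k ^ n) :
    K' = K ∧
      Set.range (fun k : Fin K => (b k, β k)) =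
        Set.range (fun k : Fin K' => (b' k, β' k)) := by
  have hcoeffs : expSumCoeffs b β = expSumCoeffs b' β' :=
    expSumCoeffs_eq_of_sum_mul_pow_eq (by simp only [Fintype.card_fin]; omega) h
  have hrange : Set.range (fun k : Fin K => (b k, β k)) =
      Set.range (fun k : Fin K' => (b' k, β' k)) := by
    rw [range_eq_graph_expSumCoeffs hb hβ, range_eq_graph_expSumCoeffs hb' hβ', hcoeffs]
  refine ⟨?_, hrange⟩
  have hcard := Set.ncard_range_of_injective (f := fun k : Fin K => (b k, β k))
    fun _ _ hkl => hβ (congrArg Prod.snd hkl)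
  rw [hrange, Set.ncard_range_of_injective fun _ _ hkl => hβ' (congrArg Prod.snd hkl)] at hcard
  simpa using hcard
end

section
/- Let β₁, …, β_K ∈ ℂ be pairwise distinct with K ≥ 2, and let σ be a non-identity permutation of {1,…,K}. Then for every 0 < λ < 1 the multiset of interpolated poles {λ β_k + (1−λ) β_{σ(k)}}_{k=1}^K is not equal to the multiset {β_k}_{k=1}^K. -/
lemma convex_normSq_identity (l : ℝ) (a b : ℂ) :
    l * (1 - l) * Complex.normSq (a - b) =
      l * Complex.normSq a + (1 - l) * Complex.normSq b -
        Complex.normSq ((l : ℂ) * a + (1 - (l : ℂ)) * b) := by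
  simp only [Complex.normSq_apply, Complex.add_re, Complex.add_im, Complex.mul_re,
    Complex.mul_im, Complex.sub_re, Complex.sub_im, Complex.ofReal_re, Complex.ofReal_im,
    Complex.one_re, Complex.one_im]
  ring

theorem interpolated_pole_multiset_differs
    (K : ℕ) (hK : 2 ≤ K) (β : Fin K → ℂ) (hβ : Function.Injective β)
    (σ : Equiv.Perm (Fin K)) (hσ : σ ≠ 1) (lam : ℝ)
    (hlam0 : 0 < lam) (hlam1 : lam < 1) :
    (Finset.univ.val.map fun k : Fin K => lam * β k + (1 - lam) * β (σ k)) ≠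
      Finset.univ.val.map β := by
  intro h
  have h2 := congrArg (fun s => (s.map Complex.normSq).sum) h
  simp only [Multiset.map_map, Function.comp] at h2
  have hsum : ∑ k : Fin K, Complex.normSq ((lam : ℂ) * β k + (1 - (lam : ℂ)) * β (σ k)) =
      ∑ k : Fin K, Complex.normSq (β k) := by
    simpa [Finset.sum, Complex.ofReal_sub, Complex.ofReal_one] using h2
  obtain ⟨k0, hk0⟩ : ∃ k, σ k ≠ k := by
    by_contra hc
    push_neg at hc
    exact hσ (Equiv.ext fun x => hc x)
  have key : ∀ k : Fin K,
      Complex.normSq ((lam : ℂ) * β k + (1 - (lam : ℂ)) * β (σ k)) ≤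
        lam * Complex.normSq (β k) + (1 - lam) * Complex.normSq (β (σ k)) := by
    intro k
    have := convex_normSq_identity lam (β k) (β (σ k))
    nlinarith [Complex.normSq_nonneg (β k - β (σ k)), mul_pos hlam0 (by linarith : (0:ℝ) < 1 - lam)]
  have keystrict :
      Complex.normSq ((lam : ℂ) * β k0 + (1 - (lam : ℂ)) * β (σ k0)) <
        lam * Complex.normSq (β k0) + (1 - lam) * Complex.normSq (β (σ k0)) := by
    have hne : β k0 - β (σ k0) ≠ 0 := sub_ne_zero.mpr fun he => hk0 (hβ he.symm)
    have hpos : 0 < Complex.normSq (β k0 - β (σ k0)) := by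
      have := Complex.normSq_pos.mpr hne
      exact this
    have := convex_normSq_identity lam (β k0) (β (σ k0))
    nlinarith [mul_pos hlam0 (by linarith : (0:ℝ) < 1 - lam)]
  have hlt : ∑ k : Fin K, Complex.normSq ((lam : ℂ) * β k + (1 - (lam : ℂ)) * β (σ k)) <
      ∑ k : Fin K, (lam * Complex.normSq (β k) + (1 - lam) * Complex.normSq (β (σ k))) :=
    Finset.sum_lt_sum (fun k _ => key k) ⟨k0, Finset.mem_univ k0, keystrict⟩
  have hperm : ∑ k : Fin K, Complex.normSq (β (σ k)) = ∑ k : Fin K, Complex.normSq (β k) :=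
    Equiv.sum_comp σ fun k => Complex.normSq (β k)
  rw [Finset.sum_add_distrib, ← Finset.mul_sum, ← Finset.mul_sum, hperm] at hlt
  rw [hsum] at hlt
  nlinarith [hlt]
end

section
/- Let c, d ∈ (0,1) and define g(α,γ) = (1+αγ)/(1−αγ)³. As c → d (with c, d fixed in a compact subset of (0,1)), the quantity γ(c,d) = √((g(c,c) − g(d,d))² + 4 g(c,d)²) / (g(c,c) + g(d,d)) tends to 1, and consequently the condition number (1+γ)/(1−γ) tends to infinity. In particular, at c = d, γ(d,d) = 1. -/
/-!
`g(c, d) = ⟨u_c, u_d⟩` is the Gram kernel of the vectors `u_c = ((n + 1) cⁿ)ₙ`, so for `c ≠ d`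
strict Cauchy–Schwarz gives `g(c, d)² < g(c, c) g(d, d)`. Directly: with
`A = 1 - cd`, `B = c - d`, `C = 1 + cd` one has `(1 + c²)(1 + d²) = C² + B²` and
`(1 - c²)(1 - d²) = A² - B²`, and `C² / A⁶ < (C² + B²) / (A² - B²)³` is clear.

`γ` is `(λ₁ - λ₂) / (λ₁ + λ₂)` for the eigenvalues of the Gram matrix `[[g(c,c), g(c,d)], [g(c,d), g(d,d)]]`,
so `γ < 1` is exactly the Cauchy–Schwarz inequality, while `γ = 1` at `c = d`.
By continuity `γ → 1` from below, hence `(1 + γ) / (1 - γ) → ∞`.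
-/

open Filter Topology

noncomputable def poleGram (a b : ℝ) : ℝ := (1 + a * b) / (1 - a * b) ^ 3

noncomputable def eigenGapRatio (a b h : ℝ) : ℝ := Real.sqrt ((a - b) ^ 2 + 4 * h ^ 2) / (a + b)

lemma eigenGapRatio_self {a : ℝ} (ha : 0 < a) : eigenGapRatio a a a = 1 := by
  have h : (a - a) ^ 2 + 4 * a ^ 2 = (2 * a) ^ 2 := by ring
  rw [eigenGapRatio, h, Real.sqrt_sq (by positivity), div_eq_one_iff_eq (by positivity)]
  ring

lemma eigenGapRatio_lt_one {a b h : ℝ} (hab : 0 < a + b) (h_lt : h ^ 2 < a * b) :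
    eigenGapRatio a b h < 1 := by
  rw [eigenGapRatio, div_lt_one hab, Real.sqrt_lt' hab]
  nlinarith

lemma continuousAt_eigenGapRatio {a b h : ℝ → ℝ} {x : ℝ} (ha : ContinuousAt a x)
    (hb : ContinuousAt b x) (hh : ContinuousAt h x) (hab : a x + b x ≠ 0) :
    ContinuousAt (fun y => eigenGapRatio (a y) (b y) (h y)) x :=
  ((((ha.sub hb).pow 2).add (continuousAt_const.mul (hh.pow 2))).sqrt).div (ha.add hb) hab

lemma poleGram_self_pos {c : ℝ} (hc : c ∈ Set.Ioo (-1 : ℝ) 1) : 0 < poleGram c c := by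
  obtain ⟨hc₀, hc₁⟩ := hc
  have : c * c < 1 := by nlinarith
  exact div_pos (by nlinarith) (pow_pos (by linarith) 3)

lemma continuousAt_poleGram {a b : ℝ → ℝ} {x : ℝ} (ha : ContinuousAt a x)
    (hb : ContinuousAt b x) (hx : a x * b x ≠ 1) :
    ContinuousAt (fun y => poleGram (a y) (b y)) x :=
  (continuousAt_const.add (ha.mul hb)).div ((continuousAt_const.sub (ha.mul hb)).pow 3)
    (pow_ne_zero 3 (sub_ne_zero.mpr hx.symm))

lemma sq_div_sq_pow_three_lt {A B C : ℝ} (hB : B ≠ 0) (hAB : 0 < A ^ 2 - B ^ 2) :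
    C ^ 2 / (A ^ 2) ^ 3 < (C ^ 2 + B ^ 2) / (A ^ 2 - B ^ 2) ^ 3 := by
  have hB2 : 0 < B ^ 2 := by positivity
  calc C ^ 2 / (A ^ 2) ^ 3 ≤ C ^ 2 / (A ^ 2 - B ^ 2) ^ 3 := by gcongr; linarith
    _ < (C ^ 2 + B ^ 2) / (A ^ 2 - B ^ 2) ^ 3 := by gcongr; linarith

lemma poleGram_sq_lt_mul {c d : ℝ} (hc : c ∈ Set.Ioo (-1 : ℝ) 1) (hd : d ∈ Set.Ioo (-1 : ℝ) 1)
    (hcd : c ≠ d) : poleGram c d ^ 2 < poleGram c c * poleGram d d := by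
  obtain ⟨hc₀, hc₁⟩ := hc
  obtain ⟨hd₀, hd₁⟩ := hd
  have hprod : 0 < (1 - c * c) * (1 - d * d) := mul_pos (by nlinarith) (by nlinarith)
  have h_num : (1 + c * c) * (1 + d * d) = (1 + c * d) ^ 2 + (c - d) ^ 2 := by ring
  have h_den : (1 - c * c) * (1 - d * d) = (1 - c * d) ^ 2 - (c - d) ^ 2 := by ring
  have h_lhs : poleGram c d ^ 2 = (1 + c * d) ^ 2 / ((1 - c * d) ^ 2) ^ 3 := by
    rw [poleGram, div_pow, ← pow_mul, ← pow_mul]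
  have h_rhs : poleGram c c * poleGram d d
      = ((1 + c * d) ^ 2 + (c - d) ^ 2) / ((1 - c * d) ^ 2 - (c - d) ^ 2) ^ 3 := by
    rw [poleGram, poleGram, div_mul_div_comm, ← mul_pow, h_num, h_den]
  rw [h_lhs, h_rhs]
  exact sq_div_sq_pow_three_lt (sub_ne_zero.mpr hcd) (h_den ▸ hprod)

lemma tendsto_one_add_div_one_sub_atTop {α : Type*} {l : Filter α} {f : α → ℝ}
    (hf : Tendsto f l (𝓝 1)) (hf_lt : ∀ᶠ x in l, f x < 1) :
    Tendsto (fun x => (1 + f x) / (1 - f x)) l atTop := by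
  have h_num : Tendsto (fun x => 1 + f x) l (𝓝 2) :=
    one_add_one_eq_two (R := ℝ) ▸ tendsto_const_nhds.add hf
  have h_den : Tendsto (fun x => 1 - f x) l (𝓝[>] 0) :=
    tendsto_nhdsWithin_of_tendsto_nhds_of_eventually_within _
      (sub_self (1 : ℝ) ▸ tendsto_const_nhds.sub hf) (hf_lt.mono fun x hx => sub_pos.mpr hx)
  simpa [div_eq_mul_inv] using h_num.pos_mul_atTop two_pos (tendsto_inv_nhdsGT_zero.comp h_den)

theorem gamma_tends_to_one_condition_number_blows_up
    (d : ℝ) (hd : d ∈ Set.Ioo (0 : ℝ) 1)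
    (g : ℝ → ℝ → ℝ) (hg : ∀ a b : ℝ, g a b = (1 + a * b) / (1 - a * b) ^ 3)
    (γ : ℝ → ℝ)
    (hγ : ∀ c : ℝ, γ c =
      Real.sqrt ((g c c - g d d) ^ 2 + 4 * (g c d) ^ 2) / (g c c + g d d)) :
    γ d = 1 ∧
    Filter.Tendsto γ (nhdsWithin d (Set.Ioo (0 : ℝ) 1 \ {d})) (nhds 1) ∧
    Filter.Tendsto (fun c => (1 + γ c) / (1 - γ c))
      (nhdsWithin d (Set.Ioo (0 : ℝ) 1 \ {d})) Filter.atTop := by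
  obtain rfl : g = poleGram := funext₂ hg
  have hγ_eq : γ = fun c => eigenGapRatio (poleGram c c) (poleGram d d) (poleGram c d) :=
    funext hγ
  have hd' : d ∈ Set.Ioo (-1 : ℝ) 1 := ⟨by linarith [hd.1], hd.2⟩
  have hdd_pos := poleGram_self_pos hd'
  have hγd : γ d = 1 := hγ_eq ▸ eigenGapRatio_self hdd_pos
  have hdd_ne : d * d ≠ 1 := by nlinarith [hd.1, hd.2]
  have hγ_cont : ContinuousAt γ d := hγ_eq ▸ continuousAt_eigenGapRatio
    (continuousAt_poleGram continuousAt_id continuousAt_id hdd_ne) continuousAt_const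
    (continuousAt_poleGram continuousAt_id continuousAt_const hdd_ne) (by positivity)
  have hγ_tendsto : Tendsto γ (𝓝[Set.Ioo 0 1 \ {d}] d) (𝓝 1) :=
    hγd ▸ hγ_cont.tendsto.mono_left nhdsWithin_le_nhds
  refine ⟨hγd, hγ_tendsto, tendsto_one_add_div_one_sub_atTop hγ_tendsto ?_⟩
  filter_upwards [self_mem_nhdsWithin] with c ⟨hc, hcd⟩
  have hc' : c ∈ Set.Ioo (-1 : ℝ) 1 := ⟨by linarith [hc.1], hc.2⟩
  rw [hγ_eq]
  exact eigenGapRatio_lt_one (add_pos (poleGram_self_pos hc') hdd_pos)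
    (poleGram_sq_lt_mul hc' hd' hcd)
end
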